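/- Let F be a field, q ∈ F× of multiplicative order strictly greater than d, let S be a finite set of at most d elements of F×, and let V ⊆ S be such that for every λ ∈ V and every k with 1 ≤ k ≤ i+1 one has q^k λ ∈ S (where 0 ≤ i ≤ d−2). Then the cardinality of V is at most d − 1 − i. -/

import Mathlib

/-!
Let `U = V ∪ qV ∪ ⋯ ∪ q^(i+1)V`; the hypotheses put `U` inside `S`. Each step
`A ↦ A ∪ qA` strictly enlarges a nonempty finite set `A` unless `qA ⊆ A`, and a
nonempty `q`-stable set contains a whole coset `{q^n a}` and so has at least
`orderOf q > d ≥ |S|` elements. Hence each of the `i + 1` steps adds an element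
and `|V| + i + 1 ≤ |U| ≤ |S| ≤ d`.
-/

open Pointwise

namespace Finset

variable {G : Type*} [Group G] [DecidableEq G] (q : G)

theorem orderOf_le_card_of_smul_finset_subset {A : Finset G} (hA : A.Nonempty)
    (hqA : q • A ⊆ A) : orderOf q ≤ A.card := by
  obtain ⟨a, ha⟩ := hA
  have hpow : ∀ n : ℕ, q ^ n * a ∈ A := by
    intro n
    induction n with
    | zero => simpa using ha
    | succ n ih =>
      rw [pow_succ', mul_assoc]
      exact hqA (smul_mem_smul_finset ih)
  have hinj : Set.InjOn (fun n : ℕ => q ^ n * a) (range (orderOf q)) := fun m hm n hn hmn =>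
    pow_injOn_Iio_orderOf (by simpa using hm) (by simpa using hn) (mul_right_cancel hmn)
  calc orderOf q = ((range (orderOf q)).image fun n => q ^ n * a).card := by
        rw [card_image_of_injOn hinj, card_range]
    _ ≤ A.card := card_le_card fun x hx => by
        obtain ⟨n, -, rfl⟩ := mem_image.mp hx
        exact hpow n

theorem card_lt_card_union_smul_finset {A : Finset G} (hA : A.Nonempty)
    (hcard : A.card < orderOf q) : A.card < (A ∪ q • A).card := by
  refine card_lt_card (ssubset_of_subset_of_ne subset_union_left fun heq => ?_)
  have hqA : q • A ⊆ A := subset_union_right.trans heq.ge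
  exact (orderOf_le_card_of_smul_finset_subset q hA hqA).not_gt hcard

/-- `powSmulUnion q V k = V ∪ q • V ∪ ⋯ ∪ q ^ k • V`. -/
def powSmulUnion (V : Finset G) : ℕ → Finset G
  | 0 => V
  | k + 1 => powSmulUnion V k ∪ q • powSmulUnion V k

variable {q}

theorem exists_pow_smul_of_mem_powSmulUnion {V : Finset G} {k : ℕ} {x : G}
    (hx : x ∈ powSmulUnion q V k) : ∃ j ≤ k, ∃ v ∈ V, q ^ j • v = x := by
  induction k generalizing x with
  | zero => exact ⟨0, le_rfl, x, hx, by simp⟩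
  | succ k ih =>
    rcases mem_union.mp hx with hx | hx
    · obtain ⟨j, hj, v, hv, rfl⟩ := ih hx
      exact ⟨j, hj.trans k.le_succ, v, hv, rfl⟩
    · obtain ⟨y, hy, rfl⟩ := mem_smul_finset.mp hx
      obtain ⟨j, hj, v, hv, rfl⟩ := ih hy
      exact ⟨j + 1, Nat.succ_le_succ hj, v, hv, by rw [pow_succ', mul_smul]⟩

theorem powSmulUnion_subset {V S : Finset G} {k : ℕ}
    (hS : ∀ v ∈ V, ∀ j ≤ k, q ^ j • v ∈ S) : powSmulUnion q V k ⊆ S := fun x hx => by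
  obtain ⟨j, hj, v, hv, rfl⟩ := exists_pow_smul_of_mem_powSmulUnion hx
  exact hS v hv j hj

theorem subset_powSmulUnion (V : Finset G) : ∀ k, V ⊆ powSmulUnion q V k
  | 0 => subset_rfl
  | k + 1 => (subset_powSmulUnion V k).trans subset_union_left

theorem card_add_le_card_powSmulUnion {V : Finset G} (hV : V.Nonempty) (k : ℕ)
    (hk : (powSmulUnion q V k).card < orderOf q) : V.card + k ≤ (powSmulUnion q V k).card := by
  induction k with
  | zero => rfl
  | succ k ih =>
    have hmono : (powSmulUnion q V k).card ≤ (powSmulUnion q V (k + 1)).card :=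
      card_le_card subset_union_left
    have hgrow := card_lt_card_union_smul_finset q (hV.mono (subset_powSmulUnion V k))
      (hmono.trans_lt hk)
    have hprev := ih (hmono.trans_lt hk)
    change _ < (powSmulUnion q V (k + 1)).card at hgrow
    omega

end Finset

theorem stmt7_general (F : Type*) [Field F] (d i : ℕ) (q : Fˣ) (hq : d < orderOf q)
    (S : Finset Fˣ) (hS : S.card ≤ d)
    (V : Finset Fˣ) (hVS : V ⊆ S)
    (hV : ∀ lam ∈ V, ∀ k, 1 ≤ k → k ≤ i + 1 → q ^ k * lam ∈ S) :
    V.card ≤ d - 1 - i := by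
  classical
  rcases V.eq_empty_or_nonempty with rfl | hVne
  · simp
  have hUS : Finset.powSmulUnion q V (i + 1) ⊆ S := by
    refine Finset.powSmulUnion_subset fun v hv j hj => ?_
    rcases j.eq_zero_or_pos with rfl | hj0
    · simpa using hVS hv
    · exact hV v hv j hj0 hj
  have hU := Finset.card_le_card hUS
  have hgrowth := Finset.card_add_le_card_powSmulUnion (q := q) hVne (i + 1) (by omega)
  omega

theorem stmt7 (F : Type*) [Field F] (d i : ℕ) (q : Fˣ) (hq : d < orderOf q)
    (hi : i ≤ d - 2) (S : Finset Fˣ) (hS : S.card ≤ d)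
    (V : Finset Fˣ) (hVS : V ⊆ S)
    (hV : ∀ lam ∈ V, ∀ k, 1 ≤ k → k ≤ i + 1 → q ^ k * lam ∈ S) :
    V.card ≤ d - 1 - i :=
  stmt7_general F d i q hq S hS V hVS hV
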